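/- arXiv:math-ph/0110002 — 3 statements merged into one kernel-verified Lean document; each statement's English description precedes it below -/
import Mathlib

section
/- There is a constant C, depending only on sup_s ‖Λ(s)‖ and sup_s ‖Λ̇(s)‖, such that for every z ∈ ℂ with Im z ≠ 0, every s ∈ [0,1], and every τ ≥ 1: ‖W_τ(s)(H₀ − z)⁻¹ W_τ(s)* − (H₀ − z)⁻¹‖ ≤ C/((Im z)² τ). In particular W_τ(s) H₀ W_τ(s)* converges to H₀ in the norm resolvent sense, uniformly in s, as τ → ∞. -/
/-!
Write `R = (H₀ - z)⁻¹` and work in the fast time `t = τ s`, where `U` is generated by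
`h(t) = H₀ + τ⁻¹ Λ(t / τ)`. The Heisenberg-picture resolvent `G(t) = U(t)* R U(t)` satisfies
`G' = i τ⁻¹ U* [Λ, R] U`, which is `O(τ⁻¹)` on an interval of length `τ`: not good enough.
The point is that `[Λ, R] = [H₀, R Λ R]` is again a commutator with the generator, so up to
`O(τ⁻¹)` it is a total derivative. Hence the corrected observable
`Ψ = U* (R - τ⁻¹ R Λ R) U` has `Ψ' = -U* (τ⁻² i [Λ, R Λ R] + τ⁻² R Λ̇ R) U = O(τ⁻²)`, and the
mean value theorem on `[0, τ s]` together with `‖R‖ ≤ |Im z|⁻¹` gives the bound with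
`C = 2 K² + 3 K`.
-/

open Filter Set
open scoped Topology Ring

theorem lie_add_smul_sub_smul_of_lie_eq_lie {R A : Type*} [CommRing R] [Ring A] [Algebra R A]
    {h₀ V r p : A} (ε : R) (hr : ⁅h₀, r⁆ = 0) (hV : ⁅V, r⁆ = ⁅h₀, p⁆) :
    ⁅h₀ + ε • V, r - ε • p⁆ = -(ε ^ 2 • ⁅V, p⁆) := by
  have expand : ⁅h₀ + ε • V, r - ε • p⁆ = ⁅h₀, r⁆ + ε • (⁅V, r⁆ - ⁅h₀, p⁆) - ε ^ 2 • ⁅V, p⁆ := by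
    simp only [Ring.lie_def, add_mul, mul_add, sub_mul, mul_sub, smul_mul_assoc, mul_smul_comm]
    module
  rw [expand, hr, hV, sub_self, smul_zero, zero_add, zero_sub]

section Resolvent

variable {R A : Type*} [CommRing R] [Ring A] [Algebra R A] {a : A} {z : R}

theorem commute_ringInverse_sub_smul_one (hz : IsUnit (a - z • 1)) :
    Commute a (a - z • 1)⁻¹ʳ := by
  have hres : Commute (a - z • 1) (a - z • 1)⁻¹ʳ :=
    (Ring.mul_inverse_cancel _ hz).trans (Ring.inverse_mul_cancel _ hz).symm
  simpa using hres.add_left ((Commute.one_left _).smul_left z)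

theorem lie_ringInverse_sub_smul_one (hz : IsUnit (a - z • 1)) (b : A) :
    ⁅b, (a - z • 1)⁻¹ʳ⁆ = ⁅a, (a - z • 1)⁻¹ʳ * b * (a - z • 1)⁻¹ʳ⁆ := by
  set r := (a - z • 1)⁻¹ʳ
  have hrt : r * (a - z • 1) = 1 := Ring.inverse_mul_cancel _ hz
  have htr : (a - z • 1) * r = 1 := Ring.mul_inverse_cancel _ hz
  calc ⁅b, r⁆ = ⁅a - z • 1, r * b * r⁆ := by
        simp only [Ring.lie_def, ← mul_assoc, htr, one_mul]
        simp only [mul_assoc, hrt, mul_one]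
    _ = ⁅a, r * b * r⁆ := by
        simp only [Ring.lie_def, sub_mul, mul_sub, smul_mul_assoc, mul_smul_comm, one_mul, mul_one,
          sub_sub_sub_cancel_right]

end Resolvent

theorem norm_lie_le {R : Type*} [NonUnitalNormedRing R] (a b : R) : ‖⁅a, b⁆‖ ≤ 2 * ‖a‖ * ‖b‖ :=
  calc ‖⁅a, b⁆‖ ≤ ‖a‖ * ‖b‖ + ‖b‖ * ‖a‖ :=
        (norm_sub_le _ _).trans (add_le_add (norm_mul_le a b) (norm_mul_le b a))
    _ = 2 * ‖a‖ * ‖b‖ := by ring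

section Calculus

variable {A : Type*} [NormedRing A] [NormedAlgebra ℂ A] [StarRing A] [StarModule ℂ A]
  [ContinuousStar A]

theorem HasDerivWithinAt.star_mul_mul {u P : ℝ → A} {h P' : A} {s : Set ℝ} {t : ℝ}
    (hu : HasDerivWithinAt u (-Complex.I • (h * u t)) s t) (hh : IsSelfAdjoint h)
    (hP : HasDerivWithinAt P P' s t) :
    HasDerivWithinAt (fun x => star (u x) * P x * u x)
      (star (u t) * (Complex.I • ⁅h, P t⁆ + P') * u t) s t := by
  convert (hu.star.mul hP).mul hu using 1
  · rfl
  simp only [Pi.mul_apply, star_smul, star_mul, hh.star_eq, star_neg, Complex.star_def,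
    Complex.conj_I, Ring.lie_def]
  simp only [neg_neg, smul_mul_assoc, mul_smul_comm, mul_add, add_mul, mul_sub, sub_mul, mul_assoc]
  module

theorem HasDerivWithinAt.star_mul_sub_smul_mul {u L : ℝ → A} {h₀ r L' : A} {ε : ℝ} {s : Set ℝ}
    {t : ℝ} (hh₀ : IsSelfAdjoint h₀) (hL : IsSelfAdjoint (L t)) (hr : Commute h₀ r)
    (hLr : ⁅L t, r⁆ = ⁅h₀, r * L t * r⁆)
    (hu : HasDerivWithinAt u (-Complex.I • ((h₀ + (ε : ℂ) • L t) * u t)) s t)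
    (hLd : HasDerivWithinAt L L' s t) :
    HasDerivWithinAt (fun x => star (u x) * (r - (ε : ℂ) • (r * L x * r)) * u x)
      (star (u t) * -(((ε : ℂ) ^ 2 * Complex.I) • ⁅L t, r * L t * r⁆ + (ε : ℂ) • (r * L' * r))
        * u t) s t := by
  have hh : IsSelfAdjoint (h₀ + (ε : ℂ) • L t) :=
    hh₀.add (IsSelfAdjoint.smul (Complex.conj_ofReal ε) hL)
  have hP : HasDerivWithinAt (fun x => r - (ε : ℂ) • (r * L x * r)) (-((ε : ℂ) • (r * L' * r)))
      s t :=
    (((hLd.const_mul r).mul_const r).const_smul (ε : ℂ)).const_sub r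
  convert hu.star_mul_mul hh hP using 2
  rw [lie_add_smul_sub_smul_of_lie_eq_lie (ε : ℂ) (commute_iff_lie_eq.mp hr) hLr]
  congr 1
  module

end Calculus

theorem IsSelfAdjoint.isUnit_sub_smul_one {A : Type*} [CStarAlgebra A] {a : A}
    (ha : IsSelfAdjoint a) {z : ℂ} (hz : z.im ≠ 0) : IsUnit (a - z • 1) := by
  have hσ : z ∉ spectrum ℂ a := fun h => hz (ha.im_eq_zero_of_mem_spectrum h)
  rw [spectrum.notMem_iff, Algebra.algebraMap_eq_smul_one, ← IsUnit.neg_iff, neg_sub] at hσ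
  exact hσ

section HilbertSpace

variable {𝓗 : Type*} [NormedAddCommGroup 𝓗] [InnerProductSpace ℂ 𝓗] [CompleteSpace 𝓗]
  {H₀ : 𝓗 →L[ℂ] 𝓗}

theorem IsSelfAdjoint.abs_im_mul_norm_le_norm_sub_smul_one_apply (hH₀ : IsSelfAdjoint H₀) (z : ℂ)
    (x : 𝓗) : |z.im| * ‖x‖ ≤ ‖(H₀ - z • 1) x‖ := by
  have him : (inner ℂ x ((H₀ - z • 1) x)).im = -(z.im * ‖x‖ ^ 2) := by
    have hreal : (inner ℂ x (H₀ x)).im = 0 := hH₀.isSymmetric.im_inner_self_apply x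
    simp [hreal, inner_self_eq_norm_sq_to_K, ← Complex.ofReal_pow]
  have key : ‖x‖ * (|z.im| * ‖x‖) ≤ ‖x‖ * ‖(H₀ - z • 1) x‖ :=
    calc ‖x‖ * (|z.im| * ‖x‖) = |(inner ℂ x ((H₀ - z • 1) x)).im| := by
          rw [him, abs_neg, abs_mul, abs_of_nonneg (sq_nonneg ‖x‖)]; ring
      _ ≤ ‖inner ℂ x ((H₀ - z • 1) x)‖ := Complex.abs_im_le_norm _
      _ ≤ ‖x‖ * ‖(H₀ - z • 1) x‖ := norm_inner_le_norm _ _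
  rcases (norm_nonneg x).eq_or_lt with hx | hx
  · simp [← hx]
  · exact le_of_mul_le_mul_left key hx

theorem IsSelfAdjoint.norm_ringInverse_sub_smul_one_le (hH₀ : IsSelfAdjoint H₀)
    {z : ℂ} (hz : z.im ≠ 0) : ‖(H₀ - z • 1)⁻¹ʳ‖ ≤ |z.im|⁻¹ := by
  have hpos : 0 < |z.im| := abs_pos.mpr hz
  refine ContinuousLinearMap.opNorm_le_bound _ (inv_nonneg.mpr hpos.le) fun y => ?_
  have hy := hH₀.abs_im_mul_norm_le_norm_sub_smul_one_apply z ((H₀ - z • 1)⁻¹ʳ y)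
  rw [← mul_apply_eq_comp, Ring.mul_inverse_cancel _ (hH₀.isUnit_sub_smul_one hz),
    one_apply_eq_self] at hy
  rwa [le_inv_mul_iff₀ hpos]

end HilbertSpace

section CStarRing

variable {A : Type*} [NormedRing A] [StarRing A] [CStarRing A]

theorem norm_star_mul_mul_of_mem_unitary {u : A} (hu : u ∈ unitary A) (a : A) :
    ‖star u * a * u‖ = ‖a‖ := by
  rw [CStarRing.norm_mul_mem_unitary _ hu, CStarRing.norm_mem_unitary_mul _ (Unitary.star_mem hu)]

theorem norm_mul_mul_star_sub_of_mem_unitary {u : A} (hu : u ∈ unitary A) (a b : A) :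
    ‖u * a * star u - b‖ = ‖star u * b * u - a‖ := by
  rw [← norm_star_mul_mul_of_mem_unitary hu, norm_sub_rev]
  congr 1
  simp only [mul_sub, sub_mul, ← mul_assoc, Unitary.star_mul_self_of_mem hu, one_mul]
  simp only [mul_assoc, Unitary.star_mul_self_of_mem hu, mul_one]

variable [NormedAlgebra ℂ A] [StarModule ℂ A]

theorem norm_star_mul_ringInverse_mul_sub_le {h₀ : A} {z : ℂ} {u L L' : ℝ → A} {ε K b T t₁ : ℝ}
    (hh₀ : IsSelfAdjoint h₀) (hz : IsUnit (h₀ - z • 1)) (hb : ‖(h₀ - z • 1)⁻¹ʳ‖ ≤ b)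
    (hu : ∀ t ∈ Icc 0 T, u t ∈ unitary A)
    (hud : ∀ t ∈ Icc 0 T,
      HasDerivWithinAt u (-Complex.I • ((h₀ + (ε : ℂ) • L t) * u t)) (Icc 0 T) t)
    (hL : ∀ t ∈ Icc 0 T, IsSelfAdjoint (L t))
    (hLd : ∀ t ∈ Icc 0 T, HasDerivWithinAt L (L' t) (Icc 0 T) t)
    (hK : ∀ t ∈ Icc 0 T, ‖L t‖ ≤ K ∧ ‖L' t‖ ≤ |ε| * K) (ht₁ : t₁ ∈ Icc 0 T) :
    ‖star (u t₁) * (h₀ - z • 1)⁻¹ʳ * u t₁ - star (u 0) * (h₀ - z • 1)⁻¹ʳ * u 0‖ ≤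
      (ε ^ 2 * (2 * K ^ 2 + K) * t₁ + 2 * |ε| * K) * b ^ 2 := by
  set r := (h₀ - z • 1)⁻¹ʳ
  have h0 : (0 : ℝ) ∈ Icc 0 T := ⟨le_rfl, ht₁.1.trans ht₁.2⟩
  have hK0 : 0 ≤ K := (norm_nonneg _).trans (hK 0 h0).1
  have hsandwich : ∀ X : A, ‖r * X * r‖ ≤ ‖X‖ * b ^ 2 := fun X =>
    calc ‖r * X * r‖ ≤ ‖r‖ * ‖X‖ * ‖r‖ := norm_mul₃_le
      _ = ‖X‖ * ‖r‖ ^ 2 := by ring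
      _ ≤ ‖X‖ * b ^ 2 := by gcongr
  have hcorr : ∀ t ∈ Icc 0 T, ‖star (u t) * (r * L t * r) * u t‖ ≤ K * b ^ 2 := fun t ht => by
    rw [norm_star_mul_mul_of_mem_unitary (hu t ht)]
    exact (hsandwich _).trans (by gcongr; exact (hK t ht).1)
  have hderiv : ∀ t ∈ Icc 0 T, ‖star (u t) *
      -(((ε : ℂ) ^ 2 * Complex.I) • ⁅L t, r * L t * r⁆ + (ε : ℂ) • (r * L' t * r)) * u t‖ ≤
      ε ^ 2 * (2 * K ^ 2 + K) * b ^ 2 := fun t ht => by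
    obtain ⟨hLK, hL'K⟩ := hK t ht
    rw [norm_star_mul_mul_of_mem_unitary (hu t ht), norm_neg]
    calc _ ≤ ‖((ε : ℂ) ^ 2 * Complex.I) • ⁅L t, r * L t * r⁆‖ + ‖(ε : ℂ) • (r * L' t * r)‖ :=
          norm_add_le _ _
      _ ≤ ε ^ 2 * (2 * K * (K * b ^ 2)) + |ε| * ((|ε| * K) * b ^ 2) := by
          rw [norm_smul, norm_smul, norm_mul, norm_pow, Complex.norm_I, Complex.norm_real,
            Real.norm_eq_abs, sq_abs, mul_one]
          gcongr
          · exact (norm_lie_le _ _).trans (by gcongr; exact (hsandwich _).trans (by gcongr))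
          · exact (hsandwich _).trans (by gcongr)
      _ = ε ^ 2 * (2 * K ^ 2 + K) * b ^ 2 := by rw [← sq_abs ε]; ring
  have hmvt := (convex_Icc 0 T).norm_image_sub_le_of_norm_hasDerivWithin_le
    (fun t ht => (hud t ht).star_mul_sub_smul_mul hh₀ (hL t ht)
      (commute_ringInverse_sub_smul_one hz) (lie_ringInverse_sub_smul_one hz (L t)) (hLd t ht))
    hderiv h0 ht₁
  rw [sub_zero, Real.norm_of_nonneg ht₁.1] at hmvt
  have hsplit : star (u t₁) * r * u t₁ - star (u 0) * r * u 0 =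
      (star (u t₁) * (r - (ε : ℂ) • (r * L t₁ * r)) * u t₁ -
        star (u 0) * (r - (ε : ℂ) • (r * L 0 * r)) * u 0) +
      (ε : ℂ) • (star (u t₁) * (r * L t₁ * r) * u t₁ - star (u 0) * (r * L 0 * r) * u 0) := by
    simp only [mul_sub, sub_mul, mul_smul_comm, smul_mul_assoc, smul_sub]
    abel
  rw [hsplit]
  calc _ ≤ ε ^ 2 * (2 * K ^ 2 + K) * b ^ 2 * t₁ + |ε| * (K * b ^ 2 + K * b ^ 2) := by
        refine (norm_add_le _ _).trans (add_le_add hmvt ?_)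
        rw [norm_smul, Complex.norm_real, Real.norm_eq_abs]
        gcongr
        exact (norm_sub_le _ _).trans (add_le_add (hcorr t₁ ht₁) (hcorr 0 h0))
    _ = _ := by ring

theorem norm_mul_ringInverse_mul_star_sub_le {h₀ : A} {z : ℂ} {Λ Λ' U : ℝ → A} {K b τ s : ℝ}
    (hh₀ : IsSelfAdjoint h₀) (hz : IsUnit (h₀ - z • 1)) (hb : ‖(h₀ - z • 1)⁻¹ʳ‖ ≤ b)
    (hτ : 0 < τ) (hs : s ∈ Icc (0 : ℝ) 1)
    (hΛsa : ∀ s ∈ Icc (0 : ℝ) 1, IsSelfAdjoint (Λ s))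
    (hΛd : ∀ s ∈ Icc (0 : ℝ) 1, HasDerivWithinAt Λ (Λ' s) (Icc (0 : ℝ) 1) s)
    (hK : ∀ s ∈ Icc (0 : ℝ) 1, ‖Λ s‖ ≤ K ∧ ‖Λ' s‖ ≤ K)
    (hU0 : U 0 = 1) (hU : ∀ t ∈ Icc 0 τ, U t ∈ unitary A)
    (hUd : ∀ t ∈ Icc 0 τ,
      HasDerivWithinAt U (-Complex.I • ((h₀ + (τ : ℂ)⁻¹ • Λ (t / τ)) * U t)) (Icc 0 τ) t) :
    ‖U (τ * s) * (h₀ - z • 1)⁻¹ʳ * star (U (τ * s)) - (h₀ - z • 1)⁻¹ʳ‖ ≤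
      (2 * K ^ 2 + 3 * K) * b ^ 2 / τ := by
  have hK0 : 0 ≤ K := (norm_nonneg _).trans (hK 0 ⟨le_rfl, zero_le_one⟩).1
  have hslow : ∀ t ∈ Icc 0 τ, t / τ ∈ Icc (0 : ℝ) 1 := fun t ht =>
    ⟨div_nonneg ht.1 hτ.le, div_le_one_of_le₀ ht.2 hτ.le⟩
  have hτs : τ * s ∈ Icc 0 τ := ⟨mul_nonneg hτ.le hs.1, mul_le_of_le_one_right hτ.le hs.2⟩
  have hrescale : ∀ t ∈ Icc 0 τ,
      HasDerivWithinAt (fun t => Λ (t / τ)) (τ⁻¹ • Λ' (t / τ)) (Icc 0 τ) t := fun t ht =>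
    (hΛd _ (hslow t ht)).scomp t (by simpa using (hasDerivWithinAt_id t _).div_const τ) hslow
  have hestimate := norm_star_mul_ringInverse_mul_sub_le (ε := τ⁻¹) hh₀ hz hb hU
    (by simpa only [Complex.ofReal_inv] using hUd) (fun t ht => hΛsa _ (hslow t ht)) hrescale
    (fun t ht => ⟨(hK _ (hslow t ht)).1, by
      rw [norm_smul, Real.norm_eq_abs]; gcongr; exact (hK _ (hslow t ht)).2⟩) hτs
  rw [hU0, star_one, mul_one, one_mul, abs_of_pos (inv_pos.mpr hτ)] at hestimate
  have hs' : (2 * K ^ 2 + K) * s ≤ 2 * K ^ 2 + K := mul_le_of_le_one_right (by positivity) hs.2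
  calc _ = ‖star (U (τ * s)) * (h₀ - z • 1)⁻¹ʳ * U (τ * s) - (h₀ - z • 1)⁻¹ʳ‖ :=
        norm_mul_mul_star_sub_of_mem_unitary (hU _ hτs) _ _
    _ ≤ _ := hestimate
    _ = ((2 * K ^ 2 + K) * s + 2 * K) * b ^ 2 / τ := by field_simp
    _ ≤ (2 * K ^ 2 + 3 * K) * b ^ 2 / τ := by gcongr ?_ * _ / _; linarith

end CStarRing

/-- **Norm resolvent convergence with explicit rate.**  There is a constant `C` such that for
every `z` with `Im z ≠ 0`, every `s ∈ [0,1]` and every `τ ≥ 1`,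
`‖W_τ(s)(H₀ − z)⁻¹W_τ(s)* − (H₀ − z)⁻¹‖ ≤ C/((Im z)² τ)`; in particular
`W_τ(s) H₀ W_τ(s)*` converges to `H₀` in the norm resolvent sense, uniformly in `s`,
as `τ → ∞`.  Here `W_τ(s) = U_τ(τ·s)` and `U_τ` is the unitary solution of
`i (d/dt) U_τ(t) = (H₀ + (1/τ) Λ(t/τ)) U_τ(t)`, `U_τ(0) = 1`. -/
theorem stmt8
    {𝓗 : Type*} [NormedAddCommGroup 𝓗] [InnerProductSpace ℂ 𝓗] [CompleteSpace 𝓗]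
    (H₀ : 𝓗 →L[ℂ] 𝓗) (hH₀ : IsSelfAdjoint H₀)
    (Λ Λ' : ℝ → 𝓗 →L[ℂ] 𝓗) (hΛsa : ∀ s ∈ Icc (0:ℝ) 1, IsSelfAdjoint (Λ s))
    (hΛd : ∀ s ∈ Icc (0:ℝ) 1, HasDerivWithinAt Λ (Λ' s) (Icc (0:ℝ) 1) s)
    (K : ℝ) (hK : ∀ s ∈ Icc (0:ℝ) 1, ‖Λ s‖ ≤ K ∧ ‖Λ' s‖ ≤ K)
    (U : ℝ → ℝ → 𝓗 →L[ℂ] 𝓗)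
    (hU0 : ∀ τ, 0 < τ → U τ 0 = 1)
    (hUun : ∀ τ, 0 < τ → ∀ t ∈ Icc (0:ℝ) τ,
      star (U τ t) * U τ t = 1 ∧ U τ t * star (U τ t) = 1)
    (hUd : ∀ τ, 0 < τ → ∀ t ∈ Icc (0:ℝ) τ, HasDerivWithinAt (U τ)
      ((-Complex.I) • ((H₀ + (τ:ℂ)⁻¹ • Λ (t / τ)) * U τ t)) (Icc (0:ℝ) τ) t) :
    (∃ C : ℝ, ∀ z : ℂ, z.im ≠ 0 → ∀ τ : ℝ, 1 ≤ τ → ∀ s ∈ Icc (0:ℝ) 1,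
      ‖U τ (τ * s) * Ring.inverse (H₀ - z • (1 : 𝓗 →L[ℂ] 𝓗)) * star (U τ (τ * s)) -
          Ring.inverse (H₀ - z • (1 : 𝓗 →L[ℂ] 𝓗))‖ ≤ C / (z.im ^ 2 * τ)) ∧
    (∀ z : ℂ, z.im ≠ 0 → ∀ ε > 0, ∃ T : ℝ, ∀ τ ≥ T, ∀ s ∈ Icc (0:ℝ) 1,
      ‖U τ (τ * s) * Ring.inverse (H₀ - z • (1 : 𝓗 →L[ℂ] 𝓗)) * star (U τ (τ * s)) -
          Ring.inverse (H₀ - z • (1 : 𝓗 →L[ℂ] 𝓗))‖ < ε) := by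
  have bound : ∀ z : ℂ, z.im ≠ 0 → ∀ τ : ℝ, 1 ≤ τ → ∀ s ∈ Icc (0:ℝ) 1,
      ‖U τ (τ * s) * (H₀ - z • 1)⁻¹ʳ * star (U τ (τ * s)) - (H₀ - z • 1)⁻¹ʳ‖ ≤
        (2 * K ^ 2 + 3 * K) / (z.im ^ 2 * τ) := by
    intro z hz τ hτ s hs
    have hτ0 : 0 < τ := one_pos.trans_le hτ
    calc _ ≤ (2 * K ^ 2 + 3 * K) * |z.im|⁻¹ ^ 2 / τ :=
          norm_mul_ringInverse_mul_star_sub_le hH₀ (hH₀.isUnit_sub_smul_one hz)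
            (hH₀.norm_ringInverse_sub_smul_one_le hz) hτ0 hs hΛsa hΛd hK (hU0 τ hτ0)
            (fun t ht => Unitary.mem_iff.mpr (hUun τ hτ0 t ht)) (hUd τ hτ0)
      _ = (2 * K ^ 2 + 3 * K) / (z.im ^ 2 * τ) := by rw [inv_pow, sq_abs]; field_simp
  refine ⟨⟨_, bound⟩, fun z hz ε hε => ?_⟩
  have hdecay : Tendsto (fun τ => (2 * K ^ 2 + 3 * K) / (z.im ^ 2 * τ)) atTop (𝓝 0) :=
    tendsto_const_nhds.div_atTop (tendsto_id.const_mul_atTop (by positivity))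
  obtain ⟨T, hT⟩ := eventually_atTop.mp
    ((hdecay.eventually (gt_mem_nhds hε)).and (eventually_ge_atTop 1))
  exact ⟨T, fun τ hτ s hs => (bound z hz τ (hT τ hτ).2 s hs).trans_lt (hT τ hτ).1⟩
end

section
/- Let Λ₁, Λ₂ : [0,1] → B(𝓗) be two families of bounded self-adjoint operators, each integrable in norm, and for τ > 0 let W¹_τ(s) and W²_τ(s) be the corresponding scaled unitary propagators (W^j_τ(s) = U^j_τ(τ·s) where U^j_τ solves the initial value problem with generator H₀ + (1/τ)Λ_j(t/τ)). Then for all s ∈ [0,1] and all τ > 0: ‖W¹_τ(s) − W²_τ(s)‖ ≤ ∫₀¹ ‖Λ₁(r) − Λ₂(r)‖ dr. -/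
/-!
With `W(t) = V₂(t)⋆ V₁(t)` for unitary solutions `Vⱼ` of `i Vⱼ' = Bⱼ Vⱼ`, `Vⱼ(0) = 1`, the
self-adjointness of `B₂` gives `W' = -i V₂⋆ (B₁ - B₂) V₁`, hence
`‖V₁(t) - V₂(t)‖ = ‖W(t) - 1‖ ≤ ∫₀ᵗ ‖B₁ - B₂‖`. Since the `Vⱼ` are only given through their
integral equations, the product rule for `W` is obtained from Fubini's theorem on the triangle
`{u ≤ r}`. For the scaled generators `Bⱼ(r) = H₀ + τ⁻¹ Λⱼ(r/τ)` the term `H₀` cancels and the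
substitution `r = τu` turns the bound into `∫₀ˢ ‖Λ₁ - Λ₂‖ ≤ ∫₀¹ ‖Λ₁ - Λ₂‖`.
-/

open MeasureTheory Set

section ProductRule

variable {E : Type*} [NormedRing E] [NormedAlgebra ℝ E] {f g : ℝ → E} {a b : ℝ}

theorem integral_primitive_mul_eq_integral_mul_tail (hab : a ≤ b)
    (hf : IntervalIntegrable f volume a b) (hg : IntervalIntegrable g volume a b) :
    ∫ r in a..b, (∫ u in a..r, f u) * g r = ∫ u in a..b, f u * ∫ r in u..b, g r := by
  set μ := volume.restrict (Ioc a b)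
  have hf' : Integrable f μ := (intervalIntegrable_iff_integrableOn_Ioc_of_le hab).1 hf
  have hg' : Integrable g μ := (intervalIntegrable_iff_integrableOn_Ioc_of_le hab).1 hg
  set P : ℝ × ℝ → E := {z | z.1 ≤ z.2}.indicator fun z => f z.1 * g z.2
  have hP : Integrable P (μ.prod μ) :=
    (hf'.mul_prod hg').indicator (measurableSet_le measurable_fst measurable_snd)
  have inner_left : ∀ r ∈ Ioc a b, ∫ u, P (u, r) ∂μ = (∫ u in a..r, f u) * g r := by
    intro r hr
    have hP_r : (fun u => P (u, r)) = (Iic r).indicator fun u => f u * g r := by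
      ext u; simp [P, indicator_apply]
    rw [hP_r, integral_indicator measurableSet_Iic, Measure.restrict_restrict measurableSet_Iic,
      Iic_inter_Ioc_of_le hr.2, integral_mul_const_of_integrable
        ((hf'.mono_measure (Measure.restrict_mono (Ioc_subset_Ioc_right hr.2) le_rfl))),
      intervalIntegral.integral_of_le hr.1.le]
  have inner_right : ∀ u ∈ Ioc a b, ∫ r, P (u, r) ∂μ = f u * ∫ r in u..b, g r := by
    intro u hu
    have hP_u : (fun r => P (u, r)) = (Ici u).indicator fun r => f u * g r := by
      ext r; simp [P, indicator_apply]
    have hIcc : Ici u ∩ Ioc a b = Icc u b := by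
      ext r; simp only [mem_inter_iff, mem_Ici, mem_Ioc, mem_Icc]; grind
    rw [hP_u, integral_indicator measurableSet_Ici, Measure.restrict_restrict measurableSet_Ici,
      hIcc, integral_Icc_eq_integral_Ioc, integral_const_mul_of_integrable
        ((hg'.mono_measure (Measure.restrict_mono (Ioc_subset_Ioc_left hu.1.le) le_rfl))),
      intervalIntegral.integral_of_le hu.2]
  calc ∫ r in a..b, (∫ u in a..r, f u) * g r = ∫ r, ∫ u, P (u, r) ∂μ ∂μ := by
        rw [intervalIntegral.integral_of_le hab]
        exact setIntegral_congr_fun measurableSet_Ioc fun r hr => (inner_left r hr).symm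
    _ = ∫ u, ∫ r, P (u, r) ∂μ ∂μ := (integral_integral_swap (f := fun u r => P (u, r)) hP).symm
    _ = ∫ u in a..b, f u * ∫ r in u..b, g r := by
        rw [intervalIntegral.integral_of_le hab]
        exact setIntegral_congr_fun measurableSet_Ioc inner_right

variable [CompleteSpace E]

theorem intervalIntegral_primitive_mul_add_mul_primitive (hab : a ≤ b)
    (hf : IntervalIntegrable f volume a b) (hg : IntervalIntegrable g volume a b) :
    ∫ r in a..b, ((∫ u in a..r, f u) * g r + f r * ∫ u in a..r, g u)
      = (∫ r in a..b, f r) * ∫ r in a..b, g r := by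
  have hPf := intervalIntegral.continuousOn_primitive_interval' hf left_mem_uIcc
  have hPg := intervalIntegral.continuousOn_primitive_interval' hg left_mem_uIcc
  have hPg' := intervalIntegral.continuousOn_primitive_interval_left
    ((intervalIntegrable_iff').1 hg)
  calc ∫ r in a..b, ((∫ u in a..r, f u) * g r + f r * ∫ u in a..r, g u)
      = (∫ r in a..b, (∫ u in a..r, f u) * g r) + ∫ r in a..b, f r * ∫ u in a..r, g u :=
        intervalIntegral.integral_add (hg.continuousOn_mul hPf) (hf.mul_continuousOn hPg)
    _ = ∫ r in a..b, ((f r * ∫ u in r..b, g u) + f r * ∫ u in a..r, g u) := by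
        rw [integral_primitive_mul_eq_integral_mul_tail hab hf hg,
          intervalIntegral.integral_add (hf.mul_continuousOn hPg') (hf.mul_continuousOn hPg)]
    _ = ∫ r in a..b, f r * ∫ u in a..b, g u := by
        refine intervalIntegral.integral_congr fun r hr => ?_
        rw [← mul_add, add_comm, intervalIntegral.integral_add_adjacent_intervals
          (hg.mono_set (uIcc_subset_uIcc_left hr)) (hg.mono_set (uIcc_subset_uIcc_right hr))]
    _ = (∫ r in a..b, f r) * ∫ r in a..b, g r :=
        ((ContinuousLinearMap.mul ℝ E).flip _).intervalIntegral_comp_comm hf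

theorem mul_eq_add_intervalIntegral_of_eq_add_primitive {F G : ℝ → E} {C D : E} (hab : a ≤ b)
    (hf : IntervalIntegrable f volume a b) (hg : IntervalIntegrable g volume a b)
    (hF : ∀ r ∈ Icc a b, F r = C + ∫ u in a..r, f u)
    (hG : ∀ r ∈ Icc a b, G r = D + ∫ u in a..r, g u) :
    F b * G b = C * D + ∫ r in a..b, (f r * G r + F r * g r) := by
  have hPf := intervalIntegral.continuousOn_primitive_interval' hf left_mem_uIcc
  have hPg := intervalIntegral.continuousOn_primitive_interval' hg left_mem_uIcc
  have hfD := hf.mul_const D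
  have hCg := hg.const_mul C
  have hfD_eq : ∫ r in a..b, f r * D = (∫ r in a..b, f r) * D :=
    ((ContinuousLinearMap.mul ℝ E).flip D).intervalIntegral_comp_comm hf
  have hCg_eq : ∫ r in a..b, C * g r = C * ∫ r in a..b, g r :=
    (ContinuousLinearMap.mul ℝ E C).intervalIntegral_comp_comm hg
  have hsplit : EqOn (fun r => f r * G r + F r * g r)
      (fun r => (f r * D + C * g r) + ((∫ u in a..r, f u) * g r + f r * ∫ u in a..r, g u))
      (uIcc a b) := fun r hr => by
    rw [uIcc_of_le hab] at hr
    simp only [hF r hr, hG r hr]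
    noncomm_ring
  rw [intervalIntegral.integral_congr hsplit, intervalIntegral.integral_add (hfD.add hCg)
      ((hg.continuousOn_mul hPf).add (hf.mul_continuousOn hPg)),
    intervalIntegral.integral_add hfD hCg,
    intervalIntegral_primitive_mul_add_mul_primitive hab hf hg, hfD_eq, hCg_eq,
    hF b ⟨hab, le_rfl⟩, hG b ⟨hab, le_rfl⟩]
  noncomm_ring

end ProductRule

section Star

variable {E : Type*} [NormedAddCommGroup E] [NormedSpace ℝ E] [StarAddMonoid E] [StarModule ℝ E]
  [ContinuousStar E] {f : ℝ → E} {a b : ℝ} {μ : Measure ℝ}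

theorem IntervalIntegrable.star (hf : IntervalIntegrable f μ a b) :
    IntervalIntegrable (fun x => star (f x)) μ a b :=
  ⟨(starL' ℝ : E ≃L[ℝ] E).toContinuousLinearMap.integrable_comp hf.1,
    (starL' ℝ : E ≃L[ℝ] E).toContinuousLinearMap.integrable_comp hf.2⟩

theorem intervalIntegral_star : ∫ x in a..b, star (f x) ∂μ = star (∫ x in a..b, f x ∂μ) := by
  simp only [intervalIntegral, star_sub]
  congr 1 <;> exact (starL' ℝ : E ≃L[ℝ] E).integral_comp_comm f

end Star

section Propagator

open Complex

variable {A : Type*} [CStarAlgebra A] {V₁ V₂ B₁ B₂ : ℝ → A} {t : ℝ}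

theorem norm_sub_le_intervalIntegral_norm_sub_of_volterra (ht : 0 ≤ t)
    (hB₁ : IntervalIntegrable B₁ volume 0 t) (hB₂ : IntervalIntegrable B₂ volume 0 t)
    (hB₂sa : ∀ r ∈ Icc 0 t, IsSelfAdjoint (B₂ r))
    (hV₁ : ContinuousOn V₁ (Icc 0 t)) (hV₂ : ContinuousOn V₂ (Icc 0 t))
    (hV₁u : ∀ r ∈ Icc 0 t, V₁ r ∈ unitary A) (hV₂u : ∀ r ∈ Icc 0 t, V₂ r ∈ unitary A)
    (hV₁eq : ∀ r ∈ Icc 0 t, V₁ r = 1 + ∫ u in 0..r, (-I) • (B₁ u * V₁ u))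
    (hV₂eq : ∀ r ∈ Icc 0 t, V₂ r = 1 + ∫ u in 0..r, (-I) • (B₂ u * V₂ u)) :
    ‖V₁ t - V₂ t‖ ≤ ∫ r in 0..t, ‖B₁ r - B₂ r‖ := by
  rw [← uIcc_of_le ht] at hV₁ hV₂
  have hk₁ : IntervalIntegrable (fun r => (-I) • (B₁ r * V₁ r)) volume 0 t :=
    (hB₁.mul_continuousOn hV₁).smul (-I)
  have hk₂ : IntervalIntegrable (fun r => (-I) • (B₂ r * V₂ r)) volume 0 t :=
    (hB₂.mul_continuousOn hV₂).smul (-I)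
  have hV₂eq_star : ∀ r ∈ Icc 0 t,
      star (V₂ r) = 1 + ∫ u in 0..r, star ((-I) • (B₂ u * V₂ u)) := fun r hr => by
    rw [hV₂eq r hr, star_add, star_one, intervalIntegral_star]
  have hprod := mul_eq_add_intervalIntegral_of_eq_add_primitive ht hk₂.star hk₁ hV₂eq_star hV₁eq
  have hintegrand : ∀ r ∈ Icc 0 t,
      star ((-I) • (B₂ r * V₂ r)) * V₁ r + star (V₂ r) * ((-I) • (B₁ r * V₁ r))
        = (-I) • (star (V₂ r) * ((B₁ r - B₂ r) * V₁ r)) := fun r hr => by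
    rw [star_smul, star_mul, (hB₂sa r hr).star_eq]
    simp only [star_neg, Complex.star_def, conj_I, neg_neg, smul_mul_assoc, mul_smul_comm, mul_sub,
      sub_mul, smul_sub, mul_assoc]
    module
  have hnorm : ∀ r ∈ Icc 0 t, ‖(-I) • (star (V₂ r) * ((B₁ r - B₂ r) * V₁ r))‖ = ‖B₁ r - B₂ r‖ :=
    fun r hr => by
      rw [norm_smul, norm_neg, norm_I, one_mul,
        CStarRing.norm_mem_unitary_mul _ (Unitary.star_mem (hV₂u r hr)),
        CStarRing.norm_mul_mem_unitary _ (hV₁u r hr)]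
  have htt : t ∈ Icc 0 t := ⟨ht, le_rfl⟩
  calc ‖V₁ t - V₂ t‖ = ‖star (V₂ t) * V₁ t - 1‖ := by
        rw [← CStarRing.norm_mem_unitary_mul _ (Unitary.star_mem (hV₂u t htt)), mul_sub,
          (Unitary.mem_iff.1 (hV₂u t htt)).1]
    _ = ‖∫ r in 0..t, (star ((-I) • (B₂ r * V₂ r)) * V₁ r
          + star (V₂ r) * ((-I) • (B₁ r * V₁ r)))‖ := by
        rw [hprod, one_mul, add_sub_cancel_left]
    _ ≤ ∫ r in 0..t, ‖B₁ r - B₂ r‖ := by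
        refine intervalIntegral.norm_integral_le_of_norm_le ht (ae_of_all _ fun r hr => ?_)
          (hB₁.sub hB₂).norm
        rw [hintegrand r (Ioc_subset_Icc_self hr), hnorm r (Ioc_subset_Icc_self hr)]

end Propagator

section Rescaling

variable {F : Type*} [NormedAddCommGroup F] {g : ℝ → F} {a b : ℝ}

theorem IntervalIntegrable.comp_div (hg : IntervalIntegrable g volume a b) (c : ℝ) :
    IntervalIntegrable (fun x => g (x / c)) volume (a * c) (b * c) := by
  simpa [div_eq_inv_mul, mul_comm] using hg.comp_mul_left (c := c⁻¹)

theorem intervalIntegral_norm_smul_comp_div_le [NormedSpace ℂ F] {τ s : ℝ} (hτ : 0 < τ)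
    (hs : s ∈ Icc (0 : ℝ) 1) (hg : IntervalIntegrable (fun r => ‖g r‖) volume 0 1) :
    ∫ r in 0..τ * s, ‖(τ : ℂ)⁻¹ • g (r / τ)‖ ≤ ∫ r in 0..1, ‖g r‖ := by
  calc ∫ r in 0..τ * s, ‖(τ : ℂ)⁻¹ • g (r / τ)‖ = ∫ r in 0..τ * s, τ⁻¹ * ‖g (r / τ)‖ := by
        simp only [norm_smul, norm_inv, Complex.norm_real, Real.norm_of_nonneg hτ.le]
    _ = ∫ r in 0..s, ‖g r‖ := by
        rw [intervalIntegral.integral_const_mul,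
          intervalIntegral.integral_comp_div (fun r => ‖g r‖) hτ.ne', zero_div,
          mul_div_cancel_left₀ s hτ.ne', smul_eq_mul, inv_mul_cancel_left₀ hτ.ne']
    _ ≤ ∫ r in 0..1, ‖g r‖ :=
        intervalIntegral.integral_mono_interval le_rfl hs.1 hs.2
          (ae_of_all _ fun _ => norm_nonneg _) hg

end Rescaling

theorem stmt9_general
    {𝓗 : Type*} [NormedAddCommGroup 𝓗] [InnerProductSpace ℂ 𝓗] [CompleteSpace 𝓗]
    (H₀ : 𝓗 →L[ℂ] 𝓗) (hH₀ : IsSelfAdjoint H₀)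
    (Λ₁ Λ₂ : ℝ → 𝓗 →L[ℂ] 𝓗)
    (hΛ₂sa : ∀ s ∈ Icc (0:ℝ) 1, IsSelfAdjoint (Λ₂ s))
    (hΛ₁int : IntervalIntegrable Λ₁ volume 0 1)
    (hΛ₂int : IntervalIntegrable Λ₂ volume 0 1)
    (U₁ U₂ : ℝ → ℝ → 𝓗 →L[ℂ] 𝓗)
    (hU₁cont : ∀ τ, 0 < τ → ContinuousOn (U₁ τ) (Icc 0 τ))
    (hU₂cont : ∀ τ, 0 < τ → ContinuousOn (U₂ τ) (Icc 0 τ))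
    (hU₁un : ∀ τ, 0 < τ → ∀ t ∈ Icc (0:ℝ) τ,
      star (U₁ τ t) * U₁ τ t = 1 ∧ U₁ τ t * star (U₁ τ t) = 1)
    (hU₂un : ∀ τ, 0 < τ → ∀ t ∈ Icc (0:ℝ) τ,
      star (U₂ τ t) * U₂ τ t = 1 ∧ U₂ τ t * star (U₂ τ t) = 1)
    (hU₁eq : ∀ τ, 0 < τ → ∀ t ∈ Icc (0:ℝ) τ,
      U₁ τ t = 1 + ∫ r in (0:ℝ)..t, (-Complex.I) • ((H₀ + (τ:ℂ)⁻¹ • Λ₁ (r / τ)) * U₁ τ r))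
    (hU₂eq : ∀ τ, 0 < τ → ∀ t ∈ Icc (0:ℝ) τ,
      U₂ τ t = 1 + ∫ r in (0:ℝ)..t, (-Complex.I) • ((H₀ + (τ:ℂ)⁻¹ • Λ₂ (r / τ)) * U₂ τ r)) :
    ∀ τ > (0:ℝ), ∀ s ∈ Icc (0:ℝ) 1,
      ‖U₁ τ (τ * s) - U₂ τ (τ * s)‖ ≤ ∫ r in (0:ℝ)..1, ‖Λ₁ r - Λ₂ r‖ := by
  intro τ hτ s hs
  have hts : τ * s ∈ Icc 0 τ := ⟨mul_nonneg hτ.le hs.1, mul_le_of_le_one_right hτ.le hs.2⟩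
  have hsub : Icc 0 (τ * s) ⊆ Icc 0 τ := Icc_subset_Icc_right hts.2
  have hgen : ∀ Λ : ℝ → 𝓗 →L[ℂ] 𝓗, IntervalIntegrable Λ volume 0 1 →
      IntervalIntegrable (fun r => H₀ + (τ : ℂ)⁻¹ • Λ (r / τ)) volume 0 (τ * s) := fun Λ hΛ => by
    have hΛτ : IntervalIntegrable (fun r => Λ (r / τ)) volume 0 τ := by simpa using hΛ.comp_div τ
    refine (intervalIntegrable_const.add (hΛτ.smul (τ : ℂ)⁻¹)).mono_set ?_
    rw [uIcc_of_le hts.1, uIcc_of_le hτ.le]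
    exact hsub
  have hsa : ∀ r ∈ Icc 0 (τ * s), IsSelfAdjoint (H₀ + (τ : ℂ)⁻¹ • Λ₂ (r / τ)) := fun r hr =>
    hH₀.add <| (by simp [IsSelfAdjoint, Complex.conj_ofReal] : IsSelfAdjoint (τ : ℂ)⁻¹).smul <|
      hΛ₂sa _ ⟨div_nonneg hr.1 hτ.le, (div_le_one hτ).2 (hr.2.trans hts.2)⟩
  calc ‖U₁ τ (τ * s) - U₂ τ (τ * s)‖
      ≤ ∫ r in 0..τ * s, ‖(H₀ + (τ : ℂ)⁻¹ • Λ₁ (r / τ)) - (H₀ + (τ : ℂ)⁻¹ • Λ₂ (r / τ))‖ :=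
        norm_sub_le_intervalIntegral_norm_sub_of_volterra hts.1 (hgen Λ₁ hΛ₁int)
          (hgen Λ₂ hΛ₂int) hsa ((hU₁cont τ hτ).mono hsub) ((hU₂cont τ hτ).mono hsub)
          (fun r hr => Unitary.mem_iff.2 (hU₁un τ hτ r (hsub hr)))
          (fun r hr => Unitary.mem_iff.2 (hU₂un τ hτ r (hsub hr)))
          (fun r hr => hU₁eq τ hτ r (hsub hr)) (fun r hr => hU₂eq τ hτ r (hsub hr))
    _ = ∫ r in 0..τ * s, ‖(τ : ℂ)⁻¹ • (Λ₁ - Λ₂) (r / τ)‖ := by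
        simp only [add_sub_add_left_eq_sub, ← smul_sub, Pi.sub_apply]
    _ ≤ ∫ r in 0..1, ‖Λ₁ r - Λ₂ r‖ :=
        intervalIntegral_norm_smul_comp_div_le hτ hs (hΛ₁int.sub hΛ₂int).norm

/-- **Stability of the scaled propagator under perturbation of the generator.**
If `Λ₁, Λ₂ : [0,1] → B(𝓗)` are integrable in norm and `W¹_τ, W²_τ` are the corresponding
scaled unitary propagators (`W^j_τ(s) = U^j_τ(τ·s)` where `U^j_τ` solves
`i (d/dt) U(t) = (H₀ + (1/τ)Λ_j(t/τ)) U(t)`, `U(0) = 1`, encoded as the corresponding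
Volterra integral equation), then for all `s ∈ [0,1]` and `τ > 0`,
`‖W¹_τ(s) − W²_τ(s)‖ ≤ ∫₀¹ ‖Λ₁(r) − Λ₂(r)‖ dr`. -/
theorem stmt9
    {𝓗 : Type*} [NormedAddCommGroup 𝓗] [InnerProductSpace ℂ 𝓗] [CompleteSpace 𝓗]
    (H₀ : 𝓗 →L[ℂ] 𝓗) (hH₀ : IsSelfAdjoint H₀)
    (Λ₁ Λ₂ : ℝ → 𝓗 →L[ℂ] 𝓗)
    (hΛ₁sa : ∀ s ∈ Icc (0:ℝ) 1, IsSelfAdjoint (Λ₁ s))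
    (hΛ₂sa : ∀ s ∈ Icc (0:ℝ) 1, IsSelfAdjoint (Λ₂ s))
    (hΛ₁int : IntervalIntegrable Λ₁ volume 0 1)
    (hΛ₂int : IntervalIntegrable Λ₂ volume 0 1)
    (U₁ U₂ : ℝ → ℝ → 𝓗 →L[ℂ] 𝓗)
    (hU₁cont : ∀ τ, 0 < τ → ContinuousOn (U₁ τ) (Icc 0 τ))
    (hU₂cont : ∀ τ, 0 < τ → ContinuousOn (U₂ τ) (Icc 0 τ))
    (hU₁un : ∀ τ, 0 < τ → ∀ t ∈ Icc (0:ℝ) τ,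
      star (U₁ τ t) * U₁ τ t = 1 ∧ U₁ τ t * star (U₁ τ t) = 1)
    (hU₂un : ∀ τ, 0 < τ → ∀ t ∈ Icc (0:ℝ) τ,
      star (U₂ τ t) * U₂ τ t = 1 ∧ U₂ τ t * star (U₂ τ t) = 1)
    (hU₁eq : ∀ τ, 0 < τ → ∀ t ∈ Icc (0:ℝ) τ,
      U₁ τ t = 1 + ∫ r in (0:ℝ)..t, (-Complex.I) • ((H₀ + (τ:ℂ)⁻¹ • Λ₁ (r / τ)) * U₁ τ r))
    (hU₂eq : ∀ τ, 0 < τ → ∀ t ∈ Icc (0:ℝ) τ,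
      U₂ τ t = 1 + ∫ r in (0:ℝ)..t, (-Complex.I) • ((H₀ + (τ:ℂ)⁻¹ • Λ₂ (r / τ)) * U₂ τ r)) :
    ∀ τ > (0:ℝ), ∀ s ∈ Icc (0:ℝ) 1,
      ‖U₁ τ (τ * s) - U₂ τ (τ * s)‖ ≤ ∫ r in (0:ℝ)..1, ‖Λ₁ r - Λ₂ r‖ :=
  stmt9_general H₀ hH₀ Λ₁ Λ₂ hΛ₂sa hΛ₁int hΛ₂int U₁ U₂ hU₁cont hU₂cont hU₁un hU₂un hU₁eq hU₂eq
end

section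
/- Fix E ∈ ℝ and let P̄_E = 1 − χ(H₀ = E). Then (i) for every ψ ∈ 𝓗, sup_{0 ≤ s ≤ r ≤ 1} ‖∫ₛʳ P̄_E e^{iτ(r'−s)(H₀−E)} dr' ψ‖ → 0 as τ → ∞; and (ii) for any family B : [0,1] → B(𝓗) of bounded operators, differentiable in norm with bounded derivative and independent of τ, and every ψ ∈ 𝓗, sup_{0 ≤ s ≤ r ≤ 1} ‖∫ₛʳ P̄_E e^{iτ(r'−s)(H₀−E)} B(r') dr' ψ‖ → 0 as τ → ∞. -/
/-!
Write `1 - χ(H₀ = E) = χ(0 < |H₀ - E| ≤ δ) + g_δ(H₀) (H₀ - E)` with `g_δ(x) = (x - E)⁻¹` on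
`|x - E| > δ`, so that `‖g_δ(H₀)‖ ≤ δ⁻¹`. The first term tends strongly to zero as `δ → 0`, and the
propagator commutes with it and is unitary. In the second, `(H₀ - E) e^{iτ(x-s)(H₀-E)}` is
`(iτ)⁻¹ d/dx e^{iτ(x-s)(H₀-E)}`, so its integral over any interval has norm at most `2/τ`. This
gives (i) uniformly in the endpoints of the interval and in the phase `s`.

For (ii), freeze the Lipschitz family `B(r')` at the points `j/N` on the cells of a grid of mesh
`1/N`; this costs `O(1/N)` uniformly in `τ`, and what remains involves only the finitely many
vectors `B(j/N) ψ`, to each of which (i) applies on its cell.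
-/

open MeasureTheory Filter Set
open scoped Topology

/-- An abstract Borel functional calculus for a bounded self-adjoint operator `H₀` on a
complex Hilbert space; these properties uniquely characterize the Borel functional
calculus of `H₀`. -/
structure BorelFC {𝓗 : Type*} [NormedAddCommGroup 𝓗] [InnerProductSpace ℂ 𝓗]
    [CompleteSpace 𝓗] (H₀ : 𝓗 →L[ℂ] 𝓗) where
  app : (ℝ → ℂ) → (𝓗 →L[ℂ] 𝓗)
  app_add : ∀ f g, app (fun x => f x + g x) = app f + app g
  app_mul : ∀ f g, app (fun x => f x * g x) = app f * app g
  app_star : ∀ f, app (fun x => (starRingEnd ℂ) (f x)) = star (app f)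
  app_one : app (fun _ => 1) = 1
  app_id : app (fun x => (x : ℂ)) = H₀
  app_norm : ∀ (f : ℝ → ℂ) (C : ℝ), 0 ≤ C →
      (∀ x : ℝ, (x : ℂ) ∈ spectrum ℂ H₀ → ‖f x‖ ≤ C) → ‖app f‖ ≤ C
  app_sot : ∀ (f : ℕ → ℝ → ℂ) (g : ℝ → ℂ) (C : ℝ),
      (∀ n x, ‖f n x‖ ≤ C) → (∀ x, Tendsto (fun n => f n x) atTop (𝓝 (g x))) →
      ∀ ψ : 𝓗, Tendsto (fun n => app (f n) ψ) atTop (𝓝 (app g ψ))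

/-- The spectral projection `χ(H₀ = E)` onto the eigenspace of `H₀` for eigenvalue `E`
(possibly zero). -/
noncomputable def BorelFC.projEQ {𝓗 : Type*} [NormedAddCommGroup 𝓗] [InnerProductSpace ℂ 𝓗]
    [CompleteSpace 𝓗] {H₀ : 𝓗 →L[ℂ] 𝓗} (B : BorelFC H₀) (E : ℝ) : 𝓗 →L[ℂ] 𝓗 :=
  B.app (fun x => if x = E then 1 else 0)

namespace BorelFC

variable {𝓗 : Type*} [NormedAddCommGroup 𝓗] [InnerProductSpace ℂ 𝓗] [CompleteSpace 𝓗]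
  {H₀ : 𝓗 →L[ℂ] 𝓗} (B : BorelFC H₀)

lemma app_sub (f g : ℝ → ℂ) : B.app (fun x => f x - g x) = B.app f - B.app g :=
  eq_sub_of_add_eq (by simpa using (B.app_add (fun x => f x - g x) g).symm)

lemma app_zero : B.app (fun _ => 0) = 0 := by
  simpa using B.app_sub (fun _ => 0) (fun _ => 0)

-- An additive map bounded by `|c|` is continuous, hence `ℝ`-linear.
lemma app_const (c : ℝ) : B.app (fun _ => (c : ℂ)) = (c : ℂ) • 1 := by
  let φ : ℝ →+ (𝓗 →L[ℂ] 𝓗) :=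
    { toFun := fun c => B.app (fun _ => (c : ℂ))
      map_zero' := by simpa using B.app_zero
      map_add' := fun a b => by simpa using B.app_add (fun _ => (a : ℂ)) (fun _ => (b : ℂ)) }
  have hφ : Continuous φ := AddMonoidHomClass.continuous_of_bound φ 1 fun c =>
    B.app_norm _ _ (by positivity) fun x _ => by simp
  simpa [φ, B.app_one, Complex.coe_smul] using map_real_smul φ hφ c 1

lemma app_sub_const (E : ℝ) : B.app (fun x => (x : ℂ) - E) = H₀ - (E : ℂ) • 1 := by
  rw [B.app_sub (fun x => (x : ℂ)) (fun _ => (E : ℂ)), B.app_id, B.app_const]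

lemma commute_app (f : ℝ → ℂ) : Commute (B.app f) H₀ := by
  calc B.app f * H₀ = B.app (fun x => f x * x) := by rw [B.app_mul, B.app_id]
    _ = B.app (fun x => x * f x) := by simp_rw [mul_comm]
    _ = H₀ * B.app f := by rw [B.app_mul, B.app_id]

lemma one_sub_projEQ (E : ℝ) :
    1 - B.projEQ E = B.app (fun x => 1 - if x = E then 1 else 0) := by
  rw [B.app_sub, B.app_one, projEQ]

lemma norm_one_sub_projEQ_le (E : ℝ) : ‖1 - B.projEQ E‖ ≤ 1 := by
  rw [B.one_sub_projEQ]
  exact B.app_norm _ 1 zero_le_one fun x _ => by split_ifs <;> simp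

end BorelFC

namespace OscillatoryDecay

theorem norm_integral_le_norm_integral_freeze_add {E F : Type*} [NormedAddCommGroup E]
    [NormedSpace ℂ E] [NormedAddCommGroup F] [NormedSpace ℂ F] [CompleteSpace F]
    {W : ℝ → E →L[ℂ] F} {g : ℝ → E} {M : ℝ} {K : NNReal} {S : Set ℝ} {a b y δ : ℝ}
    (hW : Continuous W) (hWM : ∀ x, ‖W x‖ ≤ M) (hg : LipschitzOnWith K g S) (hab : a ≤ b)
    (habS : Icc a b ⊆ S) (hy : y ∈ S) (hδ : ∀ x ∈ Ioc a b, |x - y| ≤ δ) :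
    ‖∫ x in a..b, W x (g x)‖ ≤ ‖∫ x in a..b, W x (g y)‖ + M * K * δ * (b - a) := by
  have hM : 0 ≤ M := (norm_nonneg _).trans (hWM 0)
  have hsplit : ∫ x in a..b, W x (g x)
      = (∫ x in a..b, W x (g y)) + ∫ x in a..b, W x (g x - g y) := by
    rw [← intervalIntegral.integral_add (f := fun x => W x (g y)) (g := fun x => W x (g x - g y))
      ((hW.clm_apply continuous_const).intervalIntegrable _ _)
      ((hW.continuousOn.clm_apply ((hg.continuousOn.mono habS).sub continuousOn_const)).mono
        (uIcc_of_le hab).subset).intervalIntegrable]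
    simp
  have herr : ‖∫ x in a..b, W x (g x - g y)‖ ≤ M * K * δ * |b - a| := by
    refine intervalIntegral.norm_integral_le_of_norm_le_const fun x hx => ?_
    rw [uIoc_of_le hab] at hx
    calc ‖W x (g x - g y)‖ ≤ M * ‖g x - g y‖ := (W x).le_of_opNorm_le (hWM x) _
      _ ≤ M * (K * δ) := mul_le_mul_of_nonneg_left ((hg.norm_sub_le (habS (Ioc_subset_Icc_self hx))
          hy).trans (mul_le_mul_of_nonneg_left (hδ x hx) K.2)) hM
      _ = M * K * δ := by ring
  rw [hsplit, ← abs_of_nonneg (sub_nonneg.2 hab)]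
  exact (norm_add_le _ _).trans (add_le_add le_rfl herr)

noncomputable def clampedGrid (s r : ℝ) (N j : ℕ) : ℝ := max s (min r (j / N))

section Grid

variable {s r : ℝ} {N : ℕ}

lemma clampedGrid_zero (hs : 0 ≤ s) : clampedGrid s r N 0 = s := by
  simp [clampedGrid, hs]

lemma clampedGrid_self (hN : 0 < N) (hsr : s ≤ r) (hr : r ≤ 1) : clampedGrid s r N N = r := by
  rw [clampedGrid, div_self (by positivity), min_eq_left hr, max_eq_right hsr]

lemma clampedGrid_mono : Monotone (clampedGrid s r N) := fun _ _ hij =>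
  max_le_max le_rfl (min_le_min le_rfl
    (div_le_div_of_nonneg_right (Nat.cast_le.2 hij) (Nat.cast_nonneg N)))

lemma clampedGrid_mem_Icc (hsr : s ≤ r) (j : ℕ) : clampedGrid s r N j ∈ Icc s r :=
  ⟨le_max_left _ _, max_le hsr (min_le_left _ _)⟩

lemma mem_Ioc_of_mem_Ioc_clampedGrid (hsr : s ≤ r) {j : ℕ} {x : ℝ}
    (hx : x ∈ Ioc (clampedGrid s r N j) (clampedGrid s r N (j + 1))) :
    x ∈ Ioc (j / N : ℝ) ((j + 1) / N) := by
  obtain ⟨hlo, hhi⟩ := hx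
  have hxr : x ≤ r := hhi.trans (clampedGrid_mem_Icc hsr _).2
  have hsx : s < x := (clampedGrid_mem_Icc hsr _).1.trans_lt hlo
  unfold clampedGrid at hlo hhi
  push_cast at hhi
  refine ⟨lt_of_not_ge fun h => hlo.not_ge ((le_min hxr h).trans (le_max_right _ _)), ?_⟩
  rcases le_max_iff.1 hhi with h | h
  · linarith
  · exact h.trans (min_le_right _ _)

theorem norm_integral_le_sum_clampedGrid {E F : Type*} [NormedAddCommGroup E] [NormedSpace ℂ E]
    [NormedAddCommGroup F] [NormedSpace ℂ F] [CompleteSpace F] {W : ℝ → E →L[ℂ] F} {g : ℝ → E}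
    {M : ℝ} {K : NNReal} (hW : Continuous W) (hWM : ∀ x, ‖W x‖ ≤ M)
    (hg : LipschitzOnWith K g (Icc 0 1)) (hN : 0 < N) (hs : 0 ≤ s) (hsr : s ≤ r) (hr : r ≤ 1) :
    ‖∫ x in s..r, W x (g x)‖ ≤ ∑ j ∈ Finset.range N,
      ‖∫ x in clampedGrid s r N j..clampedGrid s r N (j + 1), W x (g (j / N))‖ + M * K / N := by
  set c := clampedGrid s r N
  have hc0 : c 0 = s := clampedGrid_zero hs
  have hcN : c N = r := clampedGrid_self hN hsr hr
  have hc : ∀ j, c j ∈ Icc (0 : ℝ) 1 := fun j => Icc_subset_Icc hs hr (clampedGrid_mem_Icc hsr j)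
  have hpiece : ∀ j ∈ Finset.range N, ‖∫ x in c j..c (j + 1), W x (g x)‖ ≤
      ‖∫ x in c j..c (j + 1), W x (g (j / N))‖ + M * K * (1 / N) * (c (j + 1) - c j) := by
    intro j hj
    have hjN : (j : ℝ) / N ≤ 1 := div_le_one_of_le₀ (by exact_mod_cast (Finset.mem_range.1 hj).le)
      (Nat.cast_nonneg N)
    refine norm_integral_le_norm_integral_freeze_add hW hWM hg (clampedGrid_mono (Nat.le_succ j))
      (Icc_subset_Icc (hc j).1 (hc (j + 1)).2) ⟨by positivity, hjN⟩ fun x hx => ?_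
    obtain ⟨hlo, hhi⟩ := mem_Ioc_of_mem_Ioc_clampedGrid hsr hx
    rw [abs_of_nonneg (sub_nonneg.2 hlo.le)]
    linarith [add_div (j : ℝ) 1 N]
  have hsum : ∫ x in s..r, W x (g x) = ∑ j ∈ Finset.range N, ∫ x in c j..c (j + 1), W x (g x) := by
    rw [intervalIntegral.sum_integral_adjacent_intervals fun j _ =>
        ((hW.continuousOn.clm_apply hg.continuousOn).mono
          (uIcc_subset_Icc (hc j) (hc (j + 1)))).intervalIntegrable, hc0, hcN]
  have hM : 0 ≤ M := (norm_nonneg _).trans (hWM 0)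
  calc _ ≤ ∑ j ∈ Finset.range N,
        (‖∫ x in c j..c (j + 1), W x (g (j / N))‖ + M * K * (1 / N) * (c (j + 1) - c j)) := by
        rw [hsum]
        exact (norm_sum_le _ _).trans (Finset.sum_le_sum hpiece)
    _ = ∑ j ∈ Finset.range N, ‖∫ x in c j..c (j + 1), W x (g (j / N))‖
          + M * K * (1 / N) * (r - s) := by
        rw [Finset.sum_add_distrib, ← Finset.mul_sum, Finset.sum_range_sub c, hc0, hcN]
    _ ≤ _ := by
        rw [mul_one_div]
        gcongr
        exact mul_le_of_le_one_right (by positivity) (by linarith)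

end Grid

variable {𝓗 : Type*} [NormedAddCommGroup 𝓗] [InnerProductSpace ℂ 𝓗] [CompleteSpace 𝓗]

noncomputable def propagator (A : 𝓗 →L[ℂ] 𝓗) (t : ℝ) : 𝓗 →L[ℂ] 𝓗 :=
  NormedSpace.exp (t • (Complex.I • A))

section Propagator

variable {A : 𝓗 →L[ℂ] 𝓗}

lemma propagator_mem_unitary (hA : IsSelfAdjoint A) (t : ℝ) :
    propagator A t ∈ unitary (𝓗 →L[ℂ] 𝓗) := by
  let +nondep : NormedAlgebra ℚ (𝓗 →L[ℂ] 𝓗) := .restrictScalars ℚ ℂ _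
  exact NormedSpace.exp_mem_unitary_of_mem_skewAdjoint
    (skewAdjoint.smul_mem t (hA.smul_mem_skewAdjoint Complex.conj_I))

lemma norm_propagator_apply (hA : IsSelfAdjoint A) (t : ℝ) (v : 𝓗) :
    ‖propagator A t v‖ = ‖v‖ :=
  ContinuousLinearMap.norm_map_of_mem_unitary (propagator_mem_unitary hA t) v

lemma norm_propagator_le (hA : IsSelfAdjoint A) (t : ℝ) : ‖propagator A t‖ ≤ 1 :=
  ContinuousLinearMap.opNorm_le_bound _ zero_le_one fun v => by
    rw [norm_propagator_apply hA, one_mul]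

lemma hasDerivAt_propagator_apply (A : 𝓗 →L[ℂ] 𝓗) (τ s x : ℝ) (v : 𝓗) :
    HasDerivAt (fun y => propagator A (τ * (y - s)) v)
      (τ • (Complex.I • A) (propagator A (τ * (x - s)) v)) x := by
  have hinner : HasDerivAt (fun y : ℝ => τ * (y - s)) τ x := by
    simpa using ((hasDerivAt_id x).sub_const s).const_mul τ
  have hexp := (hasDerivAt_exp_smul_const' (𝕂 := ℝ) (Complex.I • A)
    (τ * (x - s))).scomp x hinner
  simpa [propagator, Function.comp_def] using
    ((ContinuousLinearMap.apply ℂ 𝓗 v).restrictScalars ℝ).hasFDerivAt.comp_hasDerivAt x hexp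

lemma continuous_propagator (A : 𝓗 →L[ℂ] 𝓗) : Continuous (propagator A) :=
  continuous_iff_continuousAt.2 fun t =>
    (hasDerivAt_exp_smul_const' (𝕂 := ℝ) (Complex.I • A) t).continuousAt

lemma commute_propagator {T : 𝓗 →L[ℂ] 𝓗} (h : Commute T A) (t : ℝ) :
    Commute T (propagator A t) :=
  ((h.smul_right Complex.I).smul_right t).exp_right

lemma exp_smul_eq_propagator (A : 𝓗 →L[ℂ] 𝓗) (τ x s : ℝ) :
    NormedSpace.exp ((Complex.I * τ * (x - s)) • A) = propagator A (τ * (x - s)) := by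
  rw [propagator, ← Complex.coe_smul, smul_smul]
  congr 2
  push_cast
  ring

lemma continuous_propagator_apply (A : 𝓗 →L[ℂ] 𝓗) (τ s : ℝ) (v : 𝓗) :
    Continuous fun x => propagator A (τ * (x - s)) v :=
  ((continuous_propagator A).comp (by fun_prop)).clm_apply continuous_const

lemma integral_propagator_apply_comm {T : 𝓗 →L[ℂ] 𝓗} (hT : Commute T A) (τ s a b : ℝ) (v : 𝓗) :
    T (∫ x in a..b, propagator A (τ * (x - s)) v)
      = ∫ x in a..b, propagator A (τ * (x - s)) (T v) := by
  rw [← T.intervalIntegral_comp_comm ((continuous_propagator_apply A τ s v).intervalIntegrable a b)]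
  simp_rw [← mul_apply_eq_comp, (commute_propagator hT _).eq]

lemma norm_integral_propagator_apply_le (hA : IsSelfAdjoint A) (τ s a b : ℝ) (v : 𝓗) :
    ‖∫ x in a..b, propagator A (τ * (x - s)) v‖ ≤ ‖v‖ * |b - a| :=
  intervalIntegral.norm_integral_le_of_norm_le_const fun _ _ => (norm_propagator_apply hA _ v).le

lemma smul_apply_integral_propagator_apply (A : 𝓗 →L[ℂ] 𝓗) (τ s a b : ℝ) (v : 𝓗) :
    (τ • Complex.I • A) (∫ x in a..b, propagator A (τ * (x - s)) v)
      = propagator A (τ * (b - s)) v - propagator A (τ * (a - s)) v := by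
  rw [← ContinuousLinearMap.intervalIntegral_comp_comm _
      ((continuous_propagator_apply A τ s v).intervalIntegrable a b),
    ← intervalIntegral.integral_eq_sub_of_hasDerivAt
      (fun x _ => hasDerivAt_propagator_apply A τ s x v)
      ((continuous_const.smul ((Complex.I • A).continuous.comp
        (continuous_propagator_apply A τ s v))).intervalIntegrable a b)]
  rfl

lemma norm_apply_integral_propagator_apply_le (hA : IsSelfAdjoint A) {τ : ℝ} (hτ : 0 < τ)
    (s a b : ℝ) (v : 𝓗) :
    ‖A (∫ x in a..b, propagator A (τ * (x - s)) v)‖ ≤ 2 * ‖v‖ / τ := by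
  have h := congrArg norm (smul_apply_integral_propagator_apply A τ s a b v)
  rw [smul_apply, smul_apply, norm_smul, norm_smul,
    Complex.norm_I, one_mul, Real.norm_of_nonneg hτ.le] at h
  rw [le_div_iff₀ hτ, mul_comm, h]
  calc _ ≤ ‖propagator A (τ * (b - s)) v‖ + ‖propagator A (τ * (a - s)) v‖ := norm_sub_le _ _
    _ = 2 * ‖v‖ := by rw [norm_propagator_apply hA, norm_propagator_apply hA]; ring

end Propagator

noncomputable def nearIndicator (E δ x : ℝ) : ℂ := if x ≠ E ∧ |x - E| ≤ δ then 1 else 0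

noncomputable def cutoffInverse (E δ x : ℝ) : ℂ := if δ < |x - E| then ((x : ℂ) - E)⁻¹ else 0

lemma norm_cutoffInverse_le {E δ : ℝ} (hδ : 0 < δ) (x : ℝ) : ‖cutoffInverse E δ x‖ ≤ δ⁻¹ := by
  unfold cutoffInverse
  split_ifs with h
  · rw [norm_inv, ← Complex.ofReal_sub, Complex.norm_real, Real.norm_eq_abs]
    exact inv_anti₀ hδ h.le
  · simpa using hδ.le

lemma one_sub_ite_eq_nearIndicator_add {E δ : ℝ} (hδ : 0 < δ) (x : ℝ) :
    (1 - if x = E then 1 else 0) = nearIndicator E δ x + cutoffInverse E δ x * ((x : ℂ) - E) := by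
  unfold nearIndicator cutoffInverse
  by_cases hx : x = E
  · simp [hx, hδ.le]
  · have hx' : (x : ℂ) - E ≠ 0 := sub_ne_zero.2 (by exact_mod_cast hx)
    by_cases hnear : |x - E| ≤ δ
    · simp [hx, hnear]
    · simp [hx, hnear, not_le.1 hnear, hx']

section Decay

variable {H₀ : 𝓗 →L[ℂ] 𝓗} (B : BorelFC H₀)

lemma one_sub_projEQ_eq_add {E δ : ℝ} (hδ : 0 < δ) :
    1 - B.projEQ E
      = B.app (nearIndicator E δ) + B.app (cutoffInverse E δ) * (H₀ - (E : ℂ) • 1) := by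
  rw [B.one_sub_projEQ, ← B.app_sub_const, ← B.app_mul, ← B.app_add]
  simp_rw [one_sub_ite_eq_nearIndicator_add hδ]

lemma norm_app_cutoffInverse_le {E δ : ℝ} (hδ : 0 < δ) : ‖B.app (cutoffInverse E δ)‖ ≤ δ⁻¹ :=
  B.app_norm _ _ (inv_nonneg.2 hδ.le) fun x _ => norm_cutoffInverse_le hδ x

lemma tendsto_app_nearIndicator_apply (E : ℝ) (φ : 𝓗) :
    Tendsto (fun n : ℕ => B.app (nearIndicator E (1 / (n + 1))) φ) atTop (𝓝 0) := by
  have hbound : ∀ (n : ℕ) x, ‖nearIndicator E (1 / (n + 1)) x‖ ≤ 1 := fun n x => by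
    unfold nearIndicator; split_ifs <;> simp
  have hpointwise : ∀ x, Tendsto (fun n : ℕ => nearIndicator E (1 / (n + 1)) x) atTop (𝓝 0) := by
    intro x
    by_cases hx : x = E
    · simp [nearIndicator, hx]
    · have hsmall : ∀ᶠ n : ℕ in atTop, 1 / ((n : ℝ) + 1) < |x - E| :=
        tendsto_one_div_add_atTop_nhds_zero_nat.eventually
          (gt_mem_nhds (abs_pos.2 (sub_ne_zero.2 hx)))
      refine tendsto_const_nhds.congr' (hsmall.mono fun n hn => ?_)
      simp [nearIndicator, not_le.2 hn, -one_div]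
  simpa [B.app_zero] using B.app_sot _ (fun _ => 0) 1 hbound hpointwise φ

lemma isSelfAdjoint_sub_smul_one (hH₀ : IsSelfAdjoint H₀) (E : ℝ) :
    IsSelfAdjoint (H₀ - (E : ℂ) • 1) :=
  hH₀.sub (.smul (by simp [IsSelfAdjoint]) (.one _))

theorem eventually_norm_integral_lt (hH₀ : IsSelfAdjoint H₀) (E : ℝ) (φ : 𝓗) {ε : ℝ}
    (hε : 0 < ε) :
    ∀ᶠ τ in atTop, ∀ s a b : ℝ, |b - a| ≤ 1 →
      ‖∫ x in a..b, (1 - B.projEQ E) (propagator (H₀ - (E : ℂ) • 1) (τ * (x - s)) φ)‖ < ε := by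
  set A := H₀ - (E : ℂ) • 1
  have hA : IsSelfAdjoint A := isSelfAdjoint_sub_smul_one hH₀ E
  obtain ⟨n, hn⟩ := ((tendsto_zero_iff_norm_tendsto_zero.1
    (tendsto_app_nearIndicator_apply B E φ)).eventually (gt_mem_nhds (half_pos hε))).exists
  set δ : ℝ := 1 / (n + 1)
  have hδ : 0 < δ := by positivity
  filter_upwards [eventually_gt_atTop (4 * ‖φ‖ / (δ * ε)), eventually_gt_atTop 0]
    with τ hτ hτ0 s a b hab
  rw [ContinuousLinearMap.intervalIntegral_comp_comm _
      ((continuous_propagator_apply A τ s φ).intervalIntegrable a b),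
    one_sub_projEQ_eq_add B hδ, add_apply, mul_apply_eq_comp]
  have hnear : ‖B.app (nearIndicator E δ) (∫ x in a..b, propagator A (τ * (x - s)) φ)‖ < ε / 2 := by
    rw [integral_propagator_apply_comm
      ((B.commute_app _).sub_right ((Commute.one_right _).smul_right _))]
    calc _ ≤ ‖B.app (nearIndicator E δ) φ‖ * |b - a| := norm_integral_propagator_apply_le hA ..
      _ ≤ ‖B.app (nearIndicator E δ) φ‖ := mul_le_of_le_one_right (norm_nonneg _) hab
      _ < ε / 2 := hn
  have hfar : ‖B.app (cutoffInverse E δ) (A (∫ x in a..b, propagator A (τ * (x - s)) φ))‖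
      < ε / 2 := by
    have hτ' : 4 * ‖φ‖ < τ * (δ * ε) := (div_lt_iff₀ (by positivity)).1 hτ
    calc _ ≤ δ⁻¹ * (2 * ‖φ‖ / τ) :=
          (ContinuousLinearMap.le_opNorm _ _).trans (mul_le_mul (norm_app_cutoffInverse_le B hδ)
            (norm_apply_integral_propagator_apply_le hA hτ0 ..) (norm_nonneg _) (by positivity))
      _ < ε / 2 := by
          rw [inv_mul_eq_div, div_div, div_lt_div_iff₀ (by positivity) two_pos]
          linarith
  calc _ ≤ _ := norm_add_le _ _
    _ < ε / 2 + ε / 2 := add_lt_add hnear hfar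
    _ = ε := add_halves ε

lemma continuous_one_sub_projEQ_mul_propagator (E τ s : ℝ) :
    Continuous fun x => (1 - B.projEQ E) * propagator (H₀ - (E : ℂ) • 1) (τ * (x - s)) :=
  continuous_const.mul ((continuous_propagator _).comp (by fun_prop))

lemma norm_one_sub_projEQ_mul_propagator_le (hH₀ : IsSelfAdjoint H₀) (E t : ℝ) :
    ‖(1 - B.projEQ E) * propagator (H₀ - (E : ℂ) • 1) t‖ ≤ 1 :=
  (norm_mul_le _ _).trans (mul_le_one₀ (B.norm_one_sub_projEQ_le E) (norm_nonneg _)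
    (norm_propagator_le (isSelfAdjoint_sub_smul_one hH₀ E) t))

theorem eventually_norm_integral_lipschitz_lt (hH₀ : IsSelfAdjoint H₀) (E : ℝ)
    {F : ℝ → 𝓗 →L[ℂ] 𝓗} {K : NNReal} (hF : LipschitzOnWith K F (Icc 0 1)) (ψ : 𝓗) {ε : ℝ}
    (hε : 0 < ε) :
    ∀ᶠ τ in atTop, ∀ s r : ℝ, 0 ≤ s → s ≤ r → r ≤ 1 →
      ‖∫ x in s..r, (1 - B.projEQ E) (propagator (H₀ - (E : ℂ) • 1) (τ * (x - s)) (F x ψ))‖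
        < ε := by
  have hg := (ContinuousLinearMap.apply ℂ 𝓗 ψ).lipschitz.comp_lipschitzOnWith hF
  set L := ‖ContinuousLinearMap.apply ℂ 𝓗 ψ‖₊ * K
  obtain ⟨N, hN⟩ := exists_nat_gt (2 * L / ε)
  have hN0 : 0 < N := Nat.cast_pos.1 ((by positivity : (0 : ℝ) ≤ 2 * L / ε).trans_lt hN)
  have hL : (1 : ℝ) * L / N < ε / 2 := by
    rw [one_mul, div_lt_div_iff₀ (by positivity) two_pos]
    linarith [(div_lt_iff₀ hε).1 hN]
  filter_upwards [(Filter.eventually_all_finset (Finset.range N)).2 fun j _ =>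
    eventually_norm_integral_lt B hH₀ E (F (j / N) ψ) (ε := ε / (2 * N)) (by positivity)]
    with τ hτ s r hs hsr hr
  have hcell : ∀ j, |clampedGrid s r N (j + 1) - clampedGrid s r N j| ≤ 1 := fun j => by
    obtain ⟨hj, hj'⟩ := clampedGrid_mem_Icc (N := N) hsr j
    obtain ⟨hk, hk'⟩ := clampedGrid_mem_Icc (N := N) hsr (j + 1)
    exact abs_sub_le_iff.2 ⟨by linarith, by linarith⟩
  calc _ ≤ _ := norm_integral_le_sum_clampedGrid
          (continuous_one_sub_projEQ_mul_propagator B E τ s)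
          (fun _ => norm_one_sub_projEQ_mul_propagator_le B hH₀ E _) hg hN0 hs hsr hr
    _ < ∑ _j ∈ Finset.range N, ε / (2 * N) + ε / 2 :=
        add_lt_add (Finset.sum_lt_sum_of_nonempty (Finset.nonempty_range_iff.2 hN0.ne')
          fun j hj => hτ j hj s _ _ (hcell j)) hL
    _ = ε := by
        rw [Finset.sum_const, Finset.card_range, nsmul_eq_mul]
        field_simp
        ring

end Decay

end OscillatoryDecay

open OscillatoryDecay

/-- **Strong decay of oscillatory integrals off an eigenvalue.**  Let
`P̄_E = 1 − χ(H₀ = E)`.  Then (i) for every `ψ`,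
`sup_{0 ≤ s ≤ r ≤ 1} ‖(∫ₛʳ P̄_E e^{iτ(r'−s)(H₀−E)} dr') ψ‖ → 0` as `τ → ∞`; and
(ii) for any `τ`-independent norm-differentiable family `B'' : [0,1] → B(𝓗)` with bounded
derivative, `sup_{0 ≤ s ≤ r ≤ 1} ‖(∫ₛʳ P̄_E e^{iτ(r'−s)(H₀−E)} B''(r') dr') ψ‖ → 0`. -/
theorem stmt14
    {𝓗 : Type*} [NormedAddCommGroup 𝓗] [InnerProductSpace ℂ 𝓗] [CompleteSpace 𝓗]
    (H₀ : 𝓗 →L[ℂ] 𝓗) (hH₀ : IsSelfAdjoint H₀)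
    (B : BorelFC H₀) (E : ℝ) :
    (∀ ψ : 𝓗, ∀ ε > 0, ∃ T : ℝ, ∀ τ ≥ T, ∀ s r : ℝ, 0 ≤ s → s ≤ r → r ≤ 1 →
      ‖(∫ r' in s..r, (1 - B.projEQ E) *
          NormedSpace.exp ((Complex.I * τ * (r' - s)) • (H₀ - (E : ℂ) • 1))) ψ‖ < ε) ∧
    (∀ B'' B''d : ℝ → 𝓗 →L[ℂ] 𝓗,
      (∀ r ∈ Icc (0:ℝ) 1, HasDerivWithinAt B'' (B''d r) (Icc (0:ℝ) 1) r) →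
      (∃ C : ℝ, ∀ r ∈ Icc (0:ℝ) 1, ‖B'' r‖ ≤ C ∧ ‖B''d r‖ ≤ C) →
      ∀ ψ : 𝓗, ∀ ε > 0, ∃ T : ℝ, ∀ τ ≥ T, ∀ s r : ℝ, 0 ≤ s → s ≤ r → r ≤ 1 →
        ‖(∫ r' in s..r, (1 - B.projEQ E) *
            NormedSpace.exp ((Complex.I * τ * (r' - s)) • (H₀ - (E : ℂ) • 1)) *
            B'' r') ψ‖ < ε) := by
  simp only [exp_smul_eq_propagator]
  refine ⟨fun ψ ε hε => ?_, fun B'' B''d hd hbd ψ ε hε => ?_⟩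
  · obtain ⟨T, hT⟩ := eventually_atTop.1 (eventually_norm_integral_lt B hH₀ E ψ hε)
    refine ⟨T, fun τ hτ s r hs hsr hr => ?_⟩
    rw [ContinuousLinearMap.intervalIntegral_apply
      ((continuous_one_sub_projEQ_mul_propagator B E τ s).intervalIntegrable s r)]
    exact hT τ hτ s s r (abs_sub_le_iff.2 ⟨by linarith, by linarith⟩)
  · obtain ⟨C, hC⟩ := hbd
    have hLip : LipschitzOnWith C.toNNReal B'' (Icc 0 1) :=
      (convex_Icc 0 1).lipschitzOnWith_of_nnnorm_hasDerivWithin_le hd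
        fun x hx => NNReal.le_toNNReal_of_coe_le (hC x hx).2
    obtain ⟨T, hT⟩ := eventually_atTop.1 (eventually_norm_integral_lipschitz_lt B hH₀ E hLip ψ hε)
    refine ⟨T, fun τ hτ s r hs hsr hr => ?_⟩
    have hint : IntervalIntegrable (fun x =>
        (1 - B.projEQ E) * propagator (H₀ - (E : ℂ) • 1) (τ * (x - s)) * B'' x) volume s r :=
      (((continuous_one_sub_projEQ_mul_propagator B E τ s).continuousOn.mul hLip.continuousOn).mono
        (uIcc_subset_Icc ⟨hs, hsr.trans hr⟩ ⟨hs.trans hsr, hr⟩)).intervalIntegrable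
    rw [ContinuousLinearMap.intervalIntegral_apply hint]
    exact hT τ hτ s r hs hsr hr
end
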